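/- There exists k_0 such that for every integer k ≥ k_0, setting n = ⌊(k/e)²·(π·e^{e²/2}·k³·ln k)^{1/k}⌋, the inequality n·ln n < C(n,k)·(1/k!) holds. -/

import Mathlib

/-- An ordered `k`-set (`k`-tuple of distinct elements of `V`), given as an
embedding `Fin k ↪ V`, is *consistent* with a (strict) linear order `r` on `V`
if its entries are increasing with respect to `r`. -/
def Consistent {k : ℕ} {V : Type*} (r : V → V → Prop) (e : Fin k ↪ V) : Prop :=
  ∀ i j : Fin k, i < j → r (e i) (e j)

/-- An *oriented `k`-uniform hypergraph* on `V`: a family of `k`-tuples of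
distinct elements of `V` (embeddings `Fin k ↪ V`) such that no two tuples have
the same underlying `k`-element set. -/
structure OrientedHypergraph (k : ℕ) (V : Type*) where
  edges : Finset (Fin k ↪ V)
  eq_of_range_eq : ∀ e ∈ edges, ∀ f ∈ edges, Set.range ⇑e = Set.range ⇑f → e = f

/-- *Property O*: for every linear order (given by its strict order relation `r`)
on the vertex set, some edge is consistent with it. -/
def PropertyO {k : ℕ} {V : Type*} (H : OrientedHypergraph k V) : Prop :=
  ∀ r : V → V → Prop, IsStrictTotalOrder V r → ∃ e ∈ H.edges, Consistent r e

/-- A *`k`-tournament*: an oriented `k`-uniform hypergraph containing a tuple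
for every `k`-element subset of the vertex set (such a tuple is unique by
`eq_of_range_eq`). -/
def IsTournament {k : ℕ} {V : Type*} (H : OrientedHypergraph k V) : Prop :=
  ∀ S : Finset V, S.card = k → ∃ e ∈ H.edges, Set.range ⇑e = ↑S

/-!
Put `X = π e^{e²/2} k³ ln k` and `A = (k/e)² X^{1/k}`, so `n = ⌊A⌋`. Since `ln X = O(ln k)`,
`X^{1/k} → 1`, hence `n ln n ≤ A ln A ≤ (2 + o(1)) k² ln k / e²`. On the other side
`C(n,k)/k! = n(n-1)⋯(n-k+1)/(k!)²`. The falling factorial is at least `n^k e^{-k²/(2(n-k))}`,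
with `n^k ≈ A^k = (k/e)^{2k} X` and `k²/(2(n-k)) → e²/2`, while Stirling gives
`(k!)² ≤ e² k (k/e)^{2k}`; the factor `e^{e²/2}` in `X` cancels, leaving
`C(n,k)/k! ≥ (π - o(1)) k² ln k / e²`. As `π > 2`, the inequality holds for large `k`
(concretely for `k ≥ 1000` with `X^{1/k} < 6/5`).
-/

open Real Filter Finset Topology

theorem factorial_le_exp_one_mul_sqrt_mul_pow {k : ℕ} (hk : k ≠ 0) :
    (k.factorial : ℝ) ≤ exp 1 * √k * (k / exp 1) ^ k := by
  obtain ⟨m, rfl⟩ := Nat.exists_eq_succ_of_ne_zero hk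
  have h : Stirling.stirlingSeq (m + 1) ≤ exp 1 / √2 :=
    Stirling.stirlingSeq_one ▸ Stirling.stirlingSeq'_antitone (Nat.zero_le m)
  rw [Stirling.stirlingSeq, div_le_iff₀ (by positivity), Real.sqrt_mul zero_le_two] at h
  calc _ ≤ _ := h
    _ = _ := by field_simp

theorem choose_mul_one_div_factorial (n k : ℕ) :
    (n.choose k : ℝ) * (1 / k.factorial) = n.descFactorial k / (k.factorial : ℝ) ^ 2 := by
  rw [Nat.descFactorial_eq_factorial_mul_choose]
  push_cast
  field_simp

theorem pow_mul_exp_neg_le_descFactorial {n k : ℕ} (hkn : k < n) :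
    (n : ℝ) ^ k * exp (-(k ^ 2 / (2 * (n - k)))) ≤ n.descFactorial k := by
  have hnk : (0 : ℝ) < n - k := sub_pos.2 (by exact_mod_cast hkn)
  have term : ∀ i ∈ range k, (n : ℝ) * exp (-(i / (n - k))) ≤ n - i := by
    intro i hi
    have hni : (0 : ℝ) < n - i := by
      have : (i : ℝ) < k := by exact_mod_cast mem_range.1 hi
      linarith
    -- `exp t ≥ 1 + t` at `t = i / (n - i)` reads `exp t ≥ n / (n - i)`
    have hexp : (n : ℝ) ≤ (n - i) * exp (i / (n - i)) := by
      have := add_one_le_exp (i / (n - i))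
      rw [div_add_one hni.ne', div_le_iff₀ hni] at this
      linarith
    calc (n : ℝ) * exp (-(i / (n - k))) ≤ n * exp (-(i / (n - i))) := by
          gcongr
          exact_mod_cast (mem_range.1 hi).le
      _ ≤ n - i := by
          rw [exp_neg, ← div_eq_mul_inv, div_le_iff₀ (exp_pos _)]
          exact hexp
  have hsum : ∑ i ∈ range k, (i : ℝ) ≤ k ^ 2 / 2 := by
    have h : (∑ i ∈ range k, i) * 2 ≤ k ^ 2 := by
      rw [sum_range_id_mul_two, sq]
      exact Nat.mul_le_mul_left k (Nat.sub_le k 1)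
    have h' : ((∑ i ∈ range k, i : ℕ) : ℝ) * 2 ≤ k ^ 2 := by exact_mod_cast h
    push_cast at h'
    linarith
  calc (n : ℝ) ^ k * exp (-(k ^ 2 / (2 * (n - k))))
      ≤ n ^ k * exp (-((∑ i ∈ range k, (i : ℝ)) / (n - k))) := by
        have : (∑ i ∈ range k, (i : ℝ)) / (n - k) ≤ k ^ 2 / (2 * (n - k)) := by
          rw [← div_div]
          exact div_le_div_of_nonneg_right hsum hnk.le
        gcongr
    _ = ∏ i ∈ range k, ((n : ℝ) * exp (-(i / (n - k)))) := by
        rw [prod_mul_distrib, prod_const, card_range, ← exp_sum, sum_div, ← sum_neg_distrib]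
    _ ≤ ∏ i ∈ range k, ((n : ℝ) - i) := prod_le_prod (fun i _ => by positivity) term
    _ = n.descFactorial k := by
        rw [Nat.descFactorial_eq_prod_range, Nat.cast_prod]
        exact prod_congr rfl fun i hi => (Nat.cast_sub ((mem_range.1 hi).trans hkn).le).symm

theorem pow_mul_exp_neg_div_le_choose_mul_one_div_factorial {n k : ℕ} (hk : k ≠ 0)
    (hkn : k < n) :
    (n : ℝ) ^ k * exp (-(k ^ 2 / (2 * (n - k)))) / (exp 1 ^ 2 * k * (k / exp 1) ^ (2 * k)) ≤
      (n.choose k : ℝ) * (1 / k.factorial) := by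
  have hfac : (k.factorial : ℝ) ^ 2 ≤ exp 1 ^ 2 * k * (k / exp 1) ^ (2 * k) :=
    calc (k.factorial : ℝ) ^ 2 ≤ (exp 1 * √k * (k / exp 1) ^ k) ^ 2 := by
          gcongr
          exact factorial_le_exp_one_mul_sqrt_mul_pow hk
      _ = exp 1 ^ 2 * k * (k / exp 1) ^ (2 * k) := by
          rw [mul_pow, mul_pow, sq_sqrt k.cast_nonneg, ← pow_mul, mul_comm k]
  rw [choose_mul_one_div_factorial]
  exact div_le_div₀ (by positivity) (pow_mul_exp_neg_le_descFactorial hkn)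
    (by positivity) hfac

theorem pow_mul_one_sub_div_le_floor_pow {A : ℝ} (hA : 1 ≤ A) (k : ℕ) :
    A ^ k * (1 - k / A) ≤ (⌊A⌋₊ : ℝ) ^ k := by
  have hA0 : 0 < A := by linarith
  calc A ^ k * (1 - k / A) = A ^ k * (1 + k * (-A⁻¹)) := by ring
    _ ≤ A ^ k * (1 + -A⁻¹) ^ k := by
        gcongr
        exact one_add_mul_le_pow (by linarith [inv_le_one_of_one_le₀ hA]) k
    _ = (A - 1) ^ k := by rw [← mul_pow]; field_simp; ring
    _ ≤ (⌊A⌋₊ : ℝ) ^ k := pow_le_pow_left₀ (by linarith) (Nat.sub_one_lt_floor A).le k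

theorem floor_mul_log_floor_le {A : ℝ} (hA : 1 ≤ A) :
    (⌊A⌋₊ : ℝ) * log ⌊A⌋₊ ≤ A * log A := by
  have hn : (1 : ℝ) ≤ ⌊A⌋₊ := by exact_mod_cast (Nat.one_le_floor_iff A).2 hA
  have hnA : (⌊A⌋₊ : ℝ) ≤ A := Nat.floor_le (by linarith)
  exact mul_le_mul hnA (log_le_log (by linarith) hnA) (log_nonneg hn) (by linarith)

theorem log_sq_div_exp_one_mul_le {x r : ℝ} (hx : 0 < x) (hr : 0 < r) (hr2 : r ≤ exp 2) :
    log ((x / exp 1) ^ 2 * r) ≤ 2 * log x := by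
  rw [log_mul (by positivity) hr.ne', log_pow, log_div hx.ne' (exp_pos 1).ne', log_exp]
  have := (log_le_log hr hr2).trans_eq (log_exp 2)
  push_cast
  linarith

noncomputable def radicand (k : ℕ) : ℝ :=
  π * exp (exp 1 ^ 2 / 2) * k ^ 3 * log k

theorem one_le_log_natCast {k : ℕ} (hk : 3 ≤ k) : 1 ≤ log k := by
  rw [le_log_iff_exp_le (by positivity)]
  exact exp_one_lt_three.le.trans (by exact_mod_cast hk)

theorem one_le_radicand {k : ℕ} (hk : 3 ≤ k) : 1 ≤ radicand k := by
  have hk1 : (1 : ℝ) ≤ k := by exact_mod_cast (by omega : 1 ≤ k)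
  have := one_le_log_natCast hk
  have := one_le_exp (by positivity : 0 ≤ exp 1 ^ 2 / 2)
  calc (1 : ℝ) = 1 * 1 * 1 ^ 3 * 1 := by norm_num
    _ ≤ radicand k := by
        unfold radicand
        gcongr
        linarith [pi_gt_three]

theorem radicand_le (k : ℕ) : radicand k ≤ π * exp (exp 1 ^ 2 / 2) * k ^ 4 := by
  have := log_le_self k.cast_nonneg
  unfold radicand
  calc π * exp (exp 1 ^ 2 / 2) * k ^ 3 * log k ≤ π * exp (exp 1 ^ 2 / 2) * k ^ 3 * k := by gcongr
    _ = π * exp (exp 1 ^ 2 / 2) * k ^ 4 := by ring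

theorem tendsto_log_radicand_div :
    Tendsto (fun k : ℕ => log (radicand k) / k) atTop (𝓝 0) := by
  set c := π * exp (exp 1 ^ 2 / 2)
  have hlog : Tendsto (fun k : ℕ => log k / k) atTop (𝓝 0) :=
    isLittleO_log_id_atTop.tendsto_div_nhds_zero.comp tendsto_natCast_atTop_atTop
  have hupper : Tendsto (fun k : ℕ => log c / k + 4 * (log k / k)) atTop (𝓝 0) := by
    simpa using (tendsto_const_div_atTop_nhds_zero_nat (log c)).add (hlog.const_mul 4)
  refine squeeze_zero' ?_ ?_ hupper
  · filter_upwards [eventually_ge_atTop 3] with k hk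
    exact div_nonneg (log_nonneg (one_le_radicand hk)) k.cast_nonneg
  · filter_upwards [eventually_ge_atTop 3] with k hk
    calc log (radicand k) / k ≤ log (c * k ^ 4) / k := by
          gcongr
          · linarith [one_le_radicand hk]
          · exact radicand_le k
      _ = log c / k + 4 * (log k / k) := by
          rw [log_mul (by positivity) (by positivity), log_pow]
          ring

theorem one_le_radicand_rpow {k : ℕ} (hk : 3 ≤ k) : 1 ≤ radicand k ^ (1 / (k : ℝ)) :=
  one_le_rpow (one_le_radicand hk) (by positivity)

theorem tendsto_radicand_rpow :
    Tendsto (fun k : ℕ => radicand k ^ (1 / (k : ℝ))) atTop (𝓝 1) := by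
  have h := (continuous_exp.tendsto 0).comp tendsto_log_radicand_div
  rw [exp_zero] at h
  refine h.congr' ?_
  filter_upwards [eventually_ge_atTop 3] with k hk
  rw [Function.comp_apply, rpow_def_of_pos (by linarith [one_le_radicand hk]), mul_one_div]

theorem le_radicand_mul_mul_exp_neg_div {k : ℕ} (hk : 3 ≤ k) {a q : ℝ} (ha : 9 / 10 ≤ a)
    (hq : q ≤ exp 1 ^ 2 / 2 + 1 / 10) :
    81 / 100 * π * (k ^ 2 * log k / exp 1 ^ 2) ≤ radicand k * a * exp (-q) / (exp 1 ^ 2 * k) := by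
  have hlog : 0 ≤ log k := zero_le_one.trans (one_le_log_natCast hk)
  have hexp : 9 / 10 ≤ exp (exp 1 ^ 2 / 2) * exp (-q) := by
    rw [← exp_add]
    linarith [add_one_le_exp (exp 1 ^ 2 / 2 + -q)]
  calc 81 / 100 * π * (k ^ 2 * log k / exp 1 ^ 2)
      = π * (k ^ 2 * log k / exp 1 ^ 2) * (9 / 10) * (9 / 10) := by ring
    _ ≤ π * (k ^ 2 * log k / exp 1 ^ 2) * a * (exp (exp 1 ^ 2 / 2) * exp (-q)) := by gcongr
    _ = radicand k * a * exp (-q) / (exp 1 ^ 2 * k) := by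
        have : (k : ℝ) ≠ 0 := by positivity
        unfold radicand
        field_simp

theorem le_choose_floor_mul_one_div_factorial {k : ℕ} (hk : 1000 ≤ k) :
    81 / 100 * π * (k ^ 2 * log k / exp 1 ^ 2) ≤
      ((⌊(k / exp 1) ^ 2 * radicand k ^ (1 / (k : ℝ))⌋₊).choose k : ℝ) *
        (1 / k.factorial) := by
  set r := radicand k ^ (1 / (k : ℝ))
  set A := (k / exp 1) ^ 2 * r
  set n := ⌊A⌋₊
  have hK : (1000 : ℝ) ≤ k := by exact_mod_cast hk
  have hE : exp 1 ^ 2 < 9 := by nlinarith [exp_one_lt_three, exp_pos 1]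
  have hE0 : 0 < exp 1 ^ 2 := by positivity
  have hA : k ^ 2 ≤ exp 1 ^ 2 * A := by
    rw [← div_le_iff₀' hE0, ← div_pow]
    exact le_mul_of_one_le_right (by positivity) (one_le_radicand_rpow (by omega))
  have hA1 : 1 ≤ A := by nlinarith
  have hn : A - 1 < n := Nat.sub_one_lt_floor A
  have hkn : (k : ℝ) < n := by nlinarith
  have hkA : k / A ≤ 1 / 10 := by
    rw [div_le_iff₀ (by linarith)]
    nlinarith
  have hq : k ^ 2 / (2 * (n - k)) ≤ exp 1 ^ 2 / 2 + 1 / 10 := by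
    rw [div_le_iff₀ (by linarith)]
    nlinarith
  have hAk : A ^ k = (k / exp 1) ^ (2 * k) * radicand k := by
    have hrk : r ^ k = radicand k :=
      (congrArg (· ^ k) (congrArg _ (one_div (k : ℝ)))).trans
        (rpow_inv_natCast_pow (zero_le_one.trans (one_le_radicand (by omega))) (by omega))
    rw [mul_pow, ← pow_mul, hrk]
  calc 81 / 100 * π * (k ^ 2 * log k / exp 1 ^ 2)
      ≤ radicand k * (1 - k / A) * exp (-(k ^ 2 / (2 * (n - k)))) / (exp 1 ^ 2 * k) :=
        le_radicand_mul_mul_exp_neg_div (by omega) (by linarith) hq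
    _ = A ^ k * (1 - k / A) * exp (-(k ^ 2 / (2 * (n - k)))) /
          (exp 1 ^ 2 * k * (k / exp 1) ^ (2 * k)) := by
        rw [hAk]
        field_simp
    _ ≤ n ^ k * exp (-(k ^ 2 / (2 * (n - k)))) / (exp 1 ^ 2 * k * (k / exp 1) ^ (2 * k)) := by
        gcongr
        exact pow_mul_one_sub_div_le_floor_pow hA1 k
    _ ≤ _ := pow_mul_exp_neg_div_le_choose_mul_one_div_factorial (by omega) (by exact_mod_cast hkn)

theorem floor_mul_log_floor_le_of_radicand_rpow_le {k : ℕ} (hk : 3 ≤ k)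
    (hr : radicand k ^ (1 / (k : ℝ)) ≤ 6 / 5) :
    (⌊(k / exp 1) ^ 2 * radicand k ^ (1 / (k : ℝ))⌋₊ : ℝ) *
        log ⌊(k / exp 1) ^ 2 * radicand k ^ (1 / (k : ℝ))⌋₊ ≤
      12 / 5 * (k ^ 2 * log k / exp 1 ^ 2) := by
  set r := radicand k ^ (1 / (k : ℝ))
  have hK : (3 : ℝ) ≤ k := by exact_mod_cast hk
  have hr1 : 1 ≤ r := one_le_radicand_rpow hk
  have hA : 1 ≤ (k / exp 1) ^ 2 * r :=
    one_le_mul_of_one_le_of_one_le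
      (one_le_pow₀ ((one_le_div (exp_pos 1)).2 (by linarith [exp_one_lt_three]))) hr1
  have hlogA : log ((k / exp 1) ^ 2 * r) ≤ 2 * log k :=
    log_sq_div_exp_one_mul_le (by linarith) (by linarith)
      (hr.trans (by linarith [add_one_le_exp 2]))
  have hlog : 0 ≤ log k := zero_le_one.trans (one_le_log_natCast hk)
  calc _ ≤ (k / exp 1) ^ 2 * r * log ((k / exp 1) ^ 2 * r) := floor_mul_log_floor_le hA
    _ ≤ (k / exp 1) ^ 2 * (6 / 5) * (2 * log k) := by
        have := log_nonneg hA
        gcongr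
    _ = 12 / 5 * (k ^ 2 * log k / exp 1 ^ 2) := by ring

/-- For all sufficiently large `k`, with
`n = ⌊(k/e)²·(π·e^{e²/2}·k³·ln k)^{1/k}⌋`, one has `n·ln n < C(n,k)·(1/k!)`. -/
theorem n_log_n_lt_choose_div_factorial :
    ∃ k₀ : ℕ, ∀ k : ℕ, k₀ ≤ k →
      ∀ n : ℕ, n = ⌊((k : ℝ) / Real.exp 1) ^ 2 *
          (Real.pi * Real.exp (Real.exp 1 ^ 2 / 2) * (k : ℝ) ^ 3 * Real.log k)
            ^ (1 / (k : ℝ))⌋₊ →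
        (n : ℝ) * Real.log n < (n.choose k : ℝ) * (1 / (k.factorial : ℝ)) := by
  obtain ⟨k₀, hk₀⟩ := eventually_atTop.1 <| (eventually_ge_atTop 1000).and
    (tendsto_radicand_rpow.eventually_lt_const (by norm_num : (1 : ℝ) < 6 / 5))
  refine ⟨k₀, fun k hk n hn => ?_⟩
  obtain ⟨hk1000, hr⟩ := hk₀ k hk
  have hlog : 0 < log k := zero_lt_one.trans_le (one_le_log_natCast (by omega))
  subst hn
  calc _ ≤ 12 / 5 * (k ^ 2 * log k / exp 1 ^ 2) :=
        floor_mul_log_floor_le_of_radicand_rpow_le (by omega) hr.le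
    _ < 81 / 100 * π * (k ^ 2 * log k / exp 1 ^ 2) := by
        gcongr
        linarith [pi_gt_three]
    _ ≤ _ := le_choose_floor_mul_one_div_factorial hk1000
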